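/- Let G be an abelian group, φ : G → G a group endomorphism, and k a positive integer. Then G is the directed union of the family of φ-invariant subgroups { T(φ,F) : F ≤ G finitely generated }, and ent̃(φ) = sup { ent̃(φ restricted to T(φ,F)) : F ≤ G finitely generated } and ent̃(φ^k) = sup { ent̃(φ^k restricted to T(φ,F)) : F ≤ G finitely generated }. -/

import Mathlib

open Filter Topology ENNReal

variable {G : Type*}

/-- The `n`-th partial `φ`-trajectory of a subgroup `H`:
`T_n(φ,H) = H + φ(H) + ... + φ^{n-1}(H)`. -/
noncomputable def traj [AddCommGroup G] (φ : AddMonoid.End G) (H : AddSubgroup G) (n : ℕ) :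
    AddSubgroup G :=
  ⨆ i ∈ Finset.range n, H.map (φ ^ i)

/-- `H` is `φ`-inert if `(H + φ(H))/H` is finite. -/
def IsInert [AddCommGroup G] (φ : AddMonoid.End G) (H : AddSubgroup G) : Prop :=
  Finite (↥(H ⊔ H.map φ) ⧸ H.addSubgroupOf (H ⊔ H.map φ))

/-- The sequence `n ↦ log |T_n(φ,H)/H| / n`. -/
noncomputable def entFun [AddCommGroup G] (φ : AddMonoid.End G) (H : AddSubgroup G) (n : ℕ) : ℝ :=
  Real.log (Nat.card (↥(traj φ H n) ⧸ H.addSubgroupOf (traj φ H n))) / n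

/-- The intrinsic entropy of `φ` with respect to `H`: the limit of `entFun φ H`. -/
noncomputable def entWrt [AddCommGroup G] (φ : AddMonoid.End G) (H : AddSubgroup G) : ℝ :=
  limUnder atTop (entFun φ H)

/-- The intrinsic algebraic entropy of `φ`. -/
noncomputable def intrinsicEnt [AddCommGroup G] (φ : AddMonoid.End G) : ℝ≥0∞ :=
  ⨆ (H : AddSubgroup G) (_ : IsInert φ H), ENNReal.ofReal (entWrt φ H)

/-- The `φ`-trajectory of `H`: `T(φ,H) = ⋃_{n ≥ 1} T_n(φ,H)`. -/
noncomputable def trajAll [AddCommGroup G] (φ : AddMonoid.End G) (H : AddSubgroup G) :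
    AddSubgroup G :=
  ⨆ n : ℕ, traj φ H (n + 1)

section basics
variable [AddCommGroup G] (φ : AddMonoid.End G) (H K : AddSubgroup G)

lemma mem_map_end {φ : AddMonoid.End G} {H : AddSubgroup G} {x : G} :
    x ∈ H.map φ ↔ ∃ y ∈ H, φ y = x := AddSubgroup.mem_map

lemma map_end_le_iff {φ : AddMonoid.End G} {H K : AddSubgroup G} :
    H.map φ ≤ K ↔ H ≤ K.comap φ := AddSubgroup.map_le_iff_le_comap

lemma map_end_one : H.map (1 : AddMonoid.End G) = H := by
  ext x
  simp only [mem_map_end]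
  exact ⟨fun ⟨y, hy, h⟩ => h ▸ hy, fun h => ⟨x, h, rfl⟩⟩

lemma traj_le_iff {n : ℕ} : traj φ H n ≤ K ↔ ∀ i < n, H.map (φ ^ i) ≤ K := by
  simp [traj, iSup₂_le_iff, Finset.mem_range]

lemma map_pow_le_traj {i n : ℕ} (h : i < n) : H.map (φ ^ i) ≤ traj φ H n := by
  have : traj φ H n ≤ traj φ H n := le_rfl
  rw [traj_le_iff] at this
  exact this i h

lemma traj_one : traj φ H 1 = H := by
  apply le_antisymm
  · rw [traj_le_iff]
    intro i hi
    interval_cases i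
    simp [map_end_one]
  · have := map_pow_le_traj φ H (show 0 < 1 by norm_num)
    simpa [map_end_one] using this

lemma traj_mono_left {H K : AddSubgroup G} (h : H ≤ K) (n : ℕ) : traj φ H n ≤ traj φ K n := by
  rw [traj_le_iff]
  exact fun i hi => le_trans (AddSubgroup.map_mono h) (map_pow_le_traj φ K hi)

lemma traj_mono {m n : ℕ} (h : m ≤ n) : traj φ H m ≤ traj φ H n := by
  rw [traj_le_iff]
  exact fun i hi => map_pow_le_traj φ H (lt_of_lt_of_le hi h)

lemma le_traj {n : ℕ} (h : 1 ≤ n) : H ≤ traj φ H n :=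
  (traj_one φ H).symm.trans_le (traj_mono φ H h)

lemma traj_two : traj φ H 2 = H ⊔ H.map φ := by
  apply le_antisymm
  · rw [traj_le_iff]
    intro i hi
    interval_cases i
    · simp [map_end_one]
    · simpa using le_sup_right
  · exact sup_le (le_traj φ H (by norm_num))
      (by simpa using map_pow_le_traj φ H (show 1 < 2 by norm_num))
end basics

section core
variable [AddCommGroup G] (φ : AddMonoid.End G)

lemma map_end_mul (H : AddSubgroup G) (f g : AddMonoid.End G) :
    H.map (f * g) = (H.map g).map f := by
  exact (AddSubgroup.map_map H f g).symm

lemma traj_sup_eq {H F : AddSubgroup G}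
    (hFH : F ≤ H) (h2 : ∀ h ∈ H, ∃ s ∈ F, φ h - φ s ∈ H) (n : ℕ) :
    H ⊔ traj φ H n = H ⊔ traj φ F n := by
  have h1 : H.map φ ≤ H ⊔ F.map φ := by
    intro x hx
    rw [mem_map_end] at hx
    obtain ⟨h, hh, rfl⟩ := hx
    obtain ⟨s, hs, hd⟩ := h2 h hh
    have he : φ h = (φ h - φ s) + φ s := by abel
    rw [he]
    exact AddSubgroup.add_mem_sup hd (AddSubgroup.mem_map.mpr ⟨s, hs, rfl⟩)
  have key : ∀ i, H.map (φ ^ i) ≤ H ⊔ traj φ F (i + 1) := by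
    intro i
    induction i with
    | zero => show H.map (1 : AddMonoid.End G) ≤ _; rw [map_end_one]; exact le_sup_left
    | succ i ih =>
      calc H.map (φ ^ (i + 1)) = (H.map φ).map (φ ^ i) := by rw [pow_succ, map_end_mul]
        _ ≤ (H ⊔ F.map φ).map (φ ^ i) := AddSubgroup.map_mono h1
        _ = H.map (φ ^ i) ⊔ (F.map φ).map (φ ^ i) := AddSubgroup.map_sup _ _ _
        _ = H.map (φ ^ i) ⊔ F.map (φ ^ (i + 1)) := by rw [← map_end_mul, ← pow_succ]
        _ ≤ (H ⊔ traj φ F (i + 1)) ⊔ F.map (φ ^ (i + 1)) := sup_le_sup_right ih _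
        _ ≤ H ⊔ traj φ F (i + 2) := by
            rw [sup_assoc]
            exact sup_le_sup_left
              (sup_le (traj_mono φ F (by omega)) (map_pow_le_traj φ F (by omega))) H
  apply le_antisymm
  · refine sup_le le_sup_left ?_
    rw [traj_le_iff]
    intro i hi
    exact (key i).trans (sup_le_sup_left (traj_mono φ F (by omega)) H)
  · exact sup_le_sup_left (traj_mono_left φ hFH n) H
end core

section restrict
variable [AddCommGroup G] {T : AddSubgroup G} (φ' : AddMonoid.End G) (ψ' : AddMonoid.End T)

lemma pow_restrict_comm (hc : ∀ x : T, (ψ' x : G) = φ' x) (i : ℕ) (x : T) :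
    ((ψ' ^ i) x : G) = (φ' ^ i) x := by
  induction i generalizing x with
  | zero => simp
  | succ i ih =>
    have h1 : (ψ' ^ (i + 1)) x = (ψ' ^ i) (ψ' x) := by rw [pow_succ]; rfl
    have h2 : (φ' ^ (i + 1)) (x : G) = (φ' ^ i) (φ' x) := by rw [pow_succ]; rfl
    rw [h1, h2, ih (ψ' x), hc x]

lemma map_subtype_map_pow (hc : ∀ x : T, (ψ' x : G) = φ' x) (A : AddSubgroup T) (i : ℕ) :
    (A.map (ψ' ^ i)).map T.subtype = (A.map T.subtype).map (φ' ^ i) := by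
  ext x
  simp only [AddSubgroup.mem_map, mem_map_end, AddSubgroup.coe_subtype, exists_exists_and_eq_and]
  constructor
  · rintro ⟨y, hy, rfl⟩
    exact ⟨y, hy, (pow_restrict_comm φ' ψ' hc i y).symm⟩
  · rintro ⟨y, hy, rfl⟩
    exact ⟨y, hy, pow_restrict_comm φ' ψ' hc i y⟩

lemma map_subtype_traj (hc : ∀ x : T, (ψ' x : G) = φ' x) (A : AddSubgroup T) (n : ℕ) :
    (traj ψ' A n).map T.subtype = traj φ' (A.map T.subtype) n := by
  apply le_antisymm
  · rw [AddSubgroup.map_le_iff_le_comap, traj_le_iff]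
    intro i hi
    rw [← AddSubgroup.map_le_iff_le_comap, map_subtype_map_pow φ' ψ' hc]
    exact map_pow_le_traj φ' _ hi
  · rw [traj_le_iff]
    intro i hi
    rw [← map_subtype_map_pow φ' ψ' hc]
    exact AddSubgroup.map_mono (map_pow_le_traj ψ' A hi)

lemma relindex_map_subtype (A B : AddSubgroup T) :
    (A.map T.subtype).relIndex (B.map T.subtype) = A.relIndex B := by
  rw [← AddSubgroup.relIndex_comap,
    AddSubgroup.comap_map_eq_self_of_injective T.subtype_injective]

end restrict

section ent
variable [AddCommGroup G]

lemma entFun_eq (φ : AddMonoid.End G) (H : AddSubgroup G) (n : ℕ) :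
    entFun φ H n = Real.log (H.relIndex (traj φ H n)) / n := rfl

lemma isInert_iff_relindex (φ : AddMonoid.End G) (H : AddSubgroup G) :
    IsInert φ H ↔ 0 < H.relIndex (traj φ H 2) := by
  have : H.relIndex (traj φ H 2)
      = Nat.card (↥(H ⊔ H.map φ) ⧸ H.addSubgroupOf (H ⊔ H.map φ)) := by
    rw [traj_two]; rfl
  rw [this, IsInert, Nat.card_pos_iff]
  exact ⟨fun h => ⟨⟨QuotientAddGroup.mk 0⟩, h⟩, fun h => h.2⟩
end ent

section main
variable [AddCommGroup G]

lemma relindex_traj_eq (φ' : AddMonoid.End G) {H F T : AddSubgroup G}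
    (hFH : F ≤ H) (hFT : F ≤ T)
    (ψ' : AddMonoid.End T) (hc : ∀ x : T, (ψ' x : G) = φ' x)
    (h2 : ∀ h ∈ H, ∃ s ∈ F, φ' h - φ' s ∈ H) {n : ℕ} (hn : 1 ≤ n) :
    (H.addSubgroupOf T).relIndex (traj ψ' (H.addSubgroupOf T) n)
      = H.relIndex (traj φ' H n) := by
  have h2' : ∀ h ∈ H.addSubgroupOf T, ∃ s ∈ F.addSubgroupOf T, ψ' h - ψ' s ∈ H.addSubgroupOf T := by
    intro h hh
    rw [AddSubgroup.mem_addSubgroupOf] at hh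
    obtain ⟨s, hs, hd⟩ := h2 h hh
    refine ⟨⟨s, hFT hs⟩, AddSubgroup.mem_addSubgroupOf.mpr hs, ?_⟩
    rw [AddSubgroup.mem_addSubgroupOf]
    show ((ψ' h - ψ' ⟨s, hFT hs⟩ : T) : G) ∈ H
    rw [AddSubgroup.coe_sub, hc, hc]
    exact hd
  have hFH' : F.addSubgroupOf T ≤ H.addSubgroupOf T := fun x hx =>
    AddSubgroup.mem_addSubgroupOf.mpr (hFH (AddSubgroup.mem_addSubgroupOf.mp hx))
  have e1 : traj ψ' (H.addSubgroupOf T) n = H.addSubgroupOf T ⊔ traj ψ' (F.addSubgroupOf T) n := by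
    rw [← traj_sup_eq ψ' hFH' h2' n, sup_eq_right.mpr (le_traj ψ' _ hn)]
  have e2 : traj φ' H n = H ⊔ traj φ' F n := by
    rw [← traj_sup_eq φ' hFH h2 n, sup_eq_right.mpr (le_traj φ' _ hn)]
  rw [e1, e2, AddSubgroup.relIndex_sup_left, AddSubgroup.relIndex_sup_left]
  have : H.addSubgroupOf T = H.comap T.subtype := rfl
  rw [this, AddSubgroup.relIndex_comap, map_subtype_traj φ' ψ' hc,
    AddSubgroup.addSubgroupOf_map_subtype, inf_eq_left.mpr hFT]

lemma exists_fg_aux (φ' : AddMonoid.End G) (H : AddSubgroup G) (hH : IsInert φ' H) :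
    ∃ F : AddSubgroup G, F.FG ∧ F ≤ H ∧ ∀ h ∈ H, ∃ s ∈ F, φ' h - φ' s ∈ H := by
  classical
  set K := H ⊔ H.map φ' with hKdef
  haveI : Finite (↥K ⧸ H.addSubgroupOf K) := hH
  have hK : ∀ h ∈ H, φ' h ∈ K := fun h hh =>
    le_sup_right (a := H) (AddSubgroup.mem_map.mpr ⟨h, hh, rfl⟩)
  let f : ↥H → ↥K ⧸ H.addSubgroupOf K := fun h => QuotientAddGroup.mk ⟨φ' h, hK h h.2⟩
  have hf : Function.Surjective f := by
    intro q
    obtain ⟨x, rfl⟩ := QuotientAddGroup.mk_surjective q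
    obtain ⟨a, ha, b, hb, hab⟩ := AddSubgroup.mem_sup.mp x.2
    rw [mem_map_end] at hb
    obtain ⟨c, hc, rfl⟩ := hb
    refine ⟨⟨c, hc⟩, ?_⟩
    apply QuotientAddGroup.eq.mpr
    rw [AddSubgroup.mem_addSubgroupOf]
    show -(φ' c) + (x : G) ∈ H
    rw [← hab]
    simpa using ha
  let S : Set G := Set.range (fun q => ((Function.surjInv hf q : ↥H) : G))
  have hSfin : S.Finite := Set.finite_range _
  have hSH : S ⊆ (H : Set G) := by
    rintro x ⟨q, rfl⟩
    exact (Function.surjInv hf q).2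
  refine ⟨AddSubgroup.closure S, (AddSubgroup.fg_iff _).mpr ⟨S, rfl, hSfin⟩,
    (AddSubgroup.closure_le H).mpr hSH, ?_⟩
  intro h hh
  set q := f ⟨h, hh⟩ with hq
  refine ⟨(Function.surjInv hf q : ↥H), AddSubgroup.subset_closure ⟨q, rfl⟩, ?_⟩
  have : f (Function.surjInv hf q) = f ⟨h, hh⟩ := Function.surjInv_eq hf q
  have hmem := QuotientAddGroup.eq.mp this
  rw [AddSubgroup.mem_addSubgroupOf] at hmem
  have h1 : -(φ' ((Function.surjInv hf q : ↥H) : G)) + φ' h ∈ H := hmem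
  rw [sub_eq_neg_add]
  exact h1

end main

section assemble
variable [AddCommGroup G]

lemma entFun_addSubgroupOf_eq (φ' : AddMonoid.End G) {H F T : AddSubgroup G}
    (hFH : F ≤ H) (hFT : F ≤ T)
    (ψ' : AddMonoid.End T) (hc : ∀ x : T, (ψ' x : G) = φ' x)
    (h2 : ∀ h ∈ H, ∃ s ∈ F, φ' h - φ' s ∈ H) :
    entFun ψ' (H.addSubgroupOf T) = entFun φ' H := by
  funext n
  cases n with
  | zero => simp [entFun_eq]
  | succ n =>
    rw [entFun_eq, entFun_eq, relindex_traj_eq φ' hFH hFT ψ' hc h2 (by omega)]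

lemma exists_fg (φ' : AddMonoid.End G) (H : AddSubgroup G) (hH : IsInert φ' H) :
    ∃ F : AddSubgroup G, F.FG ∧ ∀ (T : AddSubgroup G) (ψ' : AddMonoid.End T),
      F ≤ T → (∀ x : T, (ψ' x : G) = φ' x) →
      IsInert ψ' (H.addSubgroupOf T) ∧ entWrt ψ' (H.addSubgroupOf T) = entWrt φ' H := by
  obtain ⟨F, hFG, hFH, h2⟩ := exists_fg_aux φ' H hH
  refine ⟨F, hFG, fun T ψ' hFT hc => ⟨?_, ?_⟩⟩
  · rw [isInert_iff_relindex] at hH ⊢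
    rw [relindex_traj_eq φ' hFH hFT ψ' hc h2 (by norm_num)]
    exact hH
  · rw [entWrt, entWrt, entFun_addSubgroupOf_eq φ' hFH hFT ψ' hc h2]

lemma intrinsicEnt_restrict_le (φ' : AddMonoid.End G) (T : AddSubgroup G)
    (ψ' : AddMonoid.End T) (hc : ∀ x : T, (ψ' x : G) = φ' x) :
    intrinsicEnt ψ' ≤ intrinsicEnt φ' := by
  unfold intrinsicEnt
  refine iSup₂_le fun H' hH' => ?_
  have hrel : ∀ n, (H'.map T.subtype).relIndex (traj φ' (H'.map T.subtype) n)
      = H'.relIndex (traj ψ' H' n) := fun n => by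
    rw [← map_subtype_traj φ' ψ' hc, relindex_map_subtype]
  have hent : entFun φ' (H'.map T.subtype) = entFun ψ' H' := funext fun n => by
    rw [entFun_eq, entFun_eq, hrel]
  have hin : IsInert φ' (H'.map T.subtype) := by
    rw [isInert_iff_relindex] at hH' ⊢
    rw [hrel 2]; exact hH'
  have heq : ENNReal.ofReal (entWrt ψ' H') = ENNReal.ofReal (entWrt φ' (H'.map T.subtype)) := by
    rw [entWrt, entWrt, hent]
  rw [heq]
  exact le_iSup₂ (f := fun H (_ : IsInert φ' H) => ENNReal.ofReal (entWrt φ' H)) _ hin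

lemma le_trajAll (φ : AddMonoid.End G) (F : AddSubgroup G) : F ≤ trajAll φ F :=
  le_trans (le_traj φ F le_rfl) (le_iSup (fun n => traj φ F (n + 1)) 0)

lemma intrinsicEnt_eq_iSup (φ φ' : AddMonoid.End G)
    (ψ' : ∀ F : AddSubgroup G, AddMonoid.End ↥(trajAll φ F))
    (hc : ∀ (F : AddSubgroup G) (x : ↥(trajAll φ F)), (ψ' F x : G) = φ' x) :
    intrinsicEnt φ' = ⨆ (F : AddSubgroup G) (_ : F.FG), intrinsicEnt (ψ' F) := by
  apply le_antisymm
  · unfold intrinsicEnt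
    refine iSup₂_le fun H hH => ?_
    obtain ⟨F, hFG, hprop⟩ := exists_fg φ' H hH
    obtain ⟨hin, hent⟩ := hprop (trajAll φ F) (ψ' F) (le_trajAll φ F) (hc F)
    calc ENNReal.ofReal (entWrt φ' H)
        = ENNReal.ofReal (entWrt (ψ' F) (H.addSubgroupOf _)) := by rw [hent]
      _ ≤ intrinsicEnt (ψ' F) :=
          le_iSup₂ (f := fun K (_ : IsInert (ψ' F) K) => ENNReal.ofReal (entWrt (ψ' F) K)) _ hin
      _ ≤ _ := le_iSup₂ (f := fun F (_ : AddSubgroup.FG F) => intrinsicEnt (ψ' F)) F hFG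
  · exact iSup₂_le fun F _ => intrinsicEnt_restrict_le φ' _ (ψ' F) (hc F)

lemma map_traj_le (φ : AddMonoid.End G) (F : AddSubgroup G) (m : ℕ) :
    (traj φ F m).map φ ≤ traj φ F (m + 1) := by
  rw [map_end_le_iff, traj_le_iff]
  intro i hi
  rw [← map_end_le_iff, ← map_end_mul, ← pow_succ']
  exact map_pow_le_traj φ F (by omega)

lemma trajAll_directed (φ : AddMonoid.End G) (F : AddSubgroup G) :
    Directed (· ≤ ·) (fun n => traj φ F (n + 1)) := fun m n =>
  ⟨max m n, traj_mono φ F (by omega), traj_mono φ F (by omega)⟩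

lemma trajAll_invariant (φ : AddMonoid.End G) (F : AddSubgroup G) (x : G)
    (hx : x ∈ trajAll φ F) : φ x ∈ trajAll φ F := by
  rw [trajAll, AddSubgroup.mem_iSup_of_directed (trajAll_directed φ F)] at hx ⊢
  obtain ⟨n, hn⟩ := hx
  exact ⟨n + 1, map_traj_le φ F (n + 1) (AddSubgroup.mem_map.mpr ⟨x, hn, rfl⟩)⟩
end assemble

/-- `G` is the directed union of the `φ`-invariant subgroups `T(φ,F)` with `F` finitely
generated, and both `ent̃(φ)` and `ent̃(φ^k)` are the suprema of the intrinsic entropies of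
the restrictions of `φ`, resp. `φ^k`, to these subgroups. Here `ψ F` denotes the restriction
of `φ` to `T(φ,F)` (so that `(ψ F)^k` is the restriction of `φ^k`). -/
theorem intrinsicEnt_eq_iSup_restrict [AddCommGroup G] (φ : AddMonoid.End G)
    (k : ℕ) (hk : 0 < k)
    (ψ : ∀ F : AddSubgroup G, AddMonoid.End ↥(trajAll φ F))
    (hψ : ∀ (F : AddSubgroup G) (x : ↥(trajAll φ F)), (ψ F x : G) = φ x) :
    DirectedOn (· ≤ ·) {K : AddSubgroup G | ∃ F : AddSubgroup G, F.FG ∧ K = trajAll φ F} ∧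
      (∀ (F : AddSubgroup G) (x : G), x ∈ trajAll φ F → φ x ∈ trajAll φ F) ∧
      (⨆ (F : AddSubgroup G) (_ : F.FG), trajAll φ F) = ⊤ ∧
      intrinsicEnt φ = (⨆ (F : AddSubgroup G) (_ : F.FG), intrinsicEnt (ψ F)) ∧
      intrinsicEnt (φ ^ k) = ⨆ (F : AddSubgroup G) (_ : F.FG), intrinsicEnt ((ψ F) ^ k) := by
  refine ⟨?_, fun F => trajAll_invariant φ F, ?_, ?_, ?_⟩
  · rintro K₁ ⟨F₁, hF₁, rfl⟩ K₂ ⟨F₂, hF₂, rfl⟩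
    have hfg : (F₁ ⊔ F₂).FG := by
      obtain ⟨S₁, hS₁, hfin₁⟩ := (AddSubgroup.fg_iff _).mp hF₁
      obtain ⟨S₂, hS₂, hfin₂⟩ := (AddSubgroup.fg_iff _).mp hF₂
      exact (AddSubgroup.fg_iff _).mpr
        ⟨S₁ ∪ S₂, by rw [AddSubgroup.closure_union, hS₁, hS₂], hfin₁.union hfin₂⟩
    have hmono : ∀ F F' : AddSubgroup G, F ≤ F' → trajAll φ F ≤ trajAll φ F' :=
      fun F F' h => iSup_mono fun n => traj_mono_left φ h (n + 1)
    exact ⟨trajAll φ (F₁ ⊔ F₂), ⟨F₁ ⊔ F₂, hfg, rfl⟩,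
      hmono _ _ le_sup_left, hmono _ _ le_sup_right⟩
  · rw [eq_top_iff]
    intro x _
    have hfg : (AddSubgroup.closure {x}).FG :=
      (AddSubgroup.fg_iff _).mpr ⟨{x}, rfl, Set.finite_singleton x⟩
    have hx : x ∈ trajAll φ (AddSubgroup.closure {x}) :=
      le_trajAll φ _ (AddSubgroup.subset_closure rfl)
    exact le_iSup₂ (f := fun F (_ : AddSubgroup.FG F) => trajAll φ F) _ hfg hx
  · exact intrinsicEnt_eq_iSup φ φ ψ hψ
  · exact intrinsicEnt_eq_iSup φ (φ ^ k) (fun F => (ψ F) ^ k)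
      (fun F x => pow_restrict_comm φ (ψ F) (hψ F) k x)
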